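/- arXiv:2603.26460 — 3 statements merged into one kernel-verified Lean document; each statement's English description precedes it below -/
import Mathlib

section
/- The Jacobian determinant of the map γ(w, τ₁², τ₂²) = (w τ₂² / (w² τ₂² + τ₁²), w² τ₂² + τ₁², τ₁² τ₂² / (w² τ₂² + τ₁²)), viewed as a smooth map on ℝ × (0,∞) × (0,∞), has absolute value equal to τ₂² / (w² τ₂² + τ₁²) at every point (w, τ₁², τ₂²). -/
open Matrix

/-- The parameter transformation between the two observationally equivalent
bivariate linear Gaussian SEMs. -/
noncomputable def gammaMap (p : ℝ × ℝ × ℝ) : ℝ × ℝ × ℝ :=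
  ⟨p.1 * p.2.2 / (p.1 ^ 2 * p.2.2 + p.2.1),
   p.1 ^ 2 * p.2.2 + p.2.1,
   p.2.1 * p.2.2 / (p.1 ^ 2 * p.2.2 + p.2.1)⟩

/-- The components of `gammaMap`. -/
noncomputable def gammaComp : Fin 3 → (ℝ × ℝ × ℝ) → ℝ
  | 0 => fun p => (gammaMap p).1
  | 1 => fun p => (gammaMap p).2.1
  | 2 => fun p => (gammaMap p).2.2

/-- Standard basis directions of `ℝ × ℝ × ℝ`. -/
def stdDir : Fin 3 → ℝ × ℝ × ℝ
  | 0 => (1, 0, 0)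
  | 1 => (0, 1, 0)
  | 2 => (0, 0, 1)

/-- The Jacobian matrix of `gammaMap` at a point. -/
noncomputable def gammaJacobian (p : ℝ × ℝ × ℝ) : Matrix (Fin 3) (Fin 3) ℝ :=
  Matrix.of fun i j => fderiv ℝ (gammaComp i) p (stdDir j)

/-! Every entry of the Jacobian comes from the quotient rule; the first and third rows share the
denominator `D²` with `D = w² τ₂ + τ₁`, and expanding the determinant the numerator collapses to
`τ₂ D³`, so the determinant is `τ₂ / D > 0`. -/

theorem HasFDerivAt.div {𝕜 E : Type*} [NontriviallyNormedField 𝕜] [NormedAddCommGroup E]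
    [NormedSpace 𝕜 E] {c d : E → 𝕜} {c' d' : E →L[𝕜] 𝕜} {x : E}
    (hc : HasFDerivAt c c' x) (hd : HasFDerivAt d d' x) (hx : d x ≠ 0) :
    HasFDerivAt (fun y => c y / d y) ((d x ^ 2)⁻¹ • (d x • c' - c x • d')) x := by
  have hinv : HasFDerivAt (fun y => (d y)⁻¹) _ x := (hasDerivAt_inv hx).comp_hasFDerivAt x hd
  simp only [div_eq_mul_inv]
  refine (hc.mul hinv).congr_fderiv ?_
  ext v
  simp only [_root_.add_apply, _root_.smul_apply, _root_.sub_apply, smul_eq_mul]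
  field_simp
  ring

theorem fderiv_div {𝕜 E : Type*} [NontriviallyNormedField 𝕜] [NormedAddCommGroup E]
    [NormedSpace 𝕜 E] {c d : E → 𝕜} {x : E}
    (hc : DifferentiableAt 𝕜 c x) (hd : DifferentiableAt 𝕜 d x) (hx : d x ≠ 0) :
    fderiv 𝕜 (fun y => c y / d y) x = (d x ^ 2)⁻¹ • (d x • fderiv 𝕜 c x - c x • fderiv 𝕜 d x) :=
  (hc.hasFDerivAt.div hd.hasFDerivAt hx).fderiv

theorem gammaJacobian_eq (w τ1 τ2 : ℝ) (hD : w ^ 2 * τ2 + τ1 ≠ 0) :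
    gammaJacobian (w, τ1, τ2) =
      diagonal ![((w ^ 2 * τ2 + τ1) ^ 2)⁻¹, 1, ((w ^ 2 * τ2 + τ1) ^ 2)⁻¹] *
        !![τ2 * (τ1 - w ^ 2 * τ2), -(w * τ2), w * τ1;
          2 * w * τ2, 1, w ^ 2;
          -(2 * w * τ1 * τ2 ^ 2), w ^ 2 * τ2 ^ 2, τ1 ^ 2] := by
  ext i j
  rw [diagonal_mul]
  fin_cases i <;> fin_cases j <;>
    simp (disch := first | fun_prop | simp [hD]) [gammaJacobian, gammaComp, gammaMap, stdDir,
      fderiv_div, fderiv_fun_add, fderiv_fun_mul, fderiv_fun_pow, fderiv.fst, fderiv.snd, hD] <;>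
    ring

theorem det_gammaJacobian (w τ1 τ2 : ℝ) (hD : w ^ 2 * τ2 + τ1 ≠ 0) :
    (gammaJacobian (w, τ1, τ2)).det = τ2 / (w ^ 2 * τ2 + τ1) := by
  have hnum : !![τ2 * (τ1 - w ^ 2 * τ2), -(w * τ2), w * τ1;
      2 * w * τ2, 1, w ^ 2;
      -(2 * w * τ1 * τ2 ^ 2), w ^ 2 * τ2 ^ 2, τ1 ^ 2].det = τ2 * (w ^ 2 * τ2 + τ1) ^ 3 := by
    rw [det_fin_three]
    simp only [of_apply, cons_val', cons_val_zero, cons_val_one, cons_val, cons_val_fin_one]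
    ring
  rw [gammaJacobian_eq w τ1 τ2 hD, det_mul, det_diagonal, Fin.prod_univ_three, hnum]
  simp only [cons_val_zero, cons_val_one, cons_val, mul_one]
  field_simp

theorem stmt_2 (w τ1 τ2 : ℝ) (h1 : 0 < τ1) (h2 : 0 < τ2) :
    |(gammaJacobian (w, τ1, τ2)).det| = τ2 / (w ^ 2 * τ2 + τ1) := by
  have hD : 0 < w ^ 2 * τ2 + τ1 := by positivity
  rw [det_gammaJacobian w τ1 τ2 hD.ne', abs_of_pos (div_pos h2 hD)]
end

section
/- Under the model with structure X(2) → X(1) and given data with S₂ > 0 and S₁S₂ − S₁₂² > 0, and the analogously defined reverse model X(1) → X(2) with S₁ > 0, the maximized log-likelihoods of the two models are equal. Equivalently, if ŵ₁ = S₁₂/S₂, τ̂₁² = (S₁S₂−S₁₂²)/(nS₂), τ̂₂² = S₂/n are the MLEs of the first model and ŵ₂ = S₁₂/S₁, σ̂₁² = S₁/n, σ̂₂² = (S₁S₂−S₁₂²)/(nS₁) the MLEs of the second, then ℓ₁(ŵ₁, τ̂₁², τ̂₂²) = ℓ₂(ŵ₂, σ̂₁², σ̂₂²). Moreover (ŵ₂,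 σ̂₁², σ̂₂²) = γ(ŵ₁, τ̂₁², τ̂₂²). -/
/-- Log-likelihood of the model `X(1) = w X(2) + ε₁, X(2) = ε₂`. -/
noncomputable def loglik1 (n : ℕ) (S1 S2 S12 : ℝ) (w τ1 τ2 : ℝ) : ℝ :=
  -(n : ℝ) * Real.log (2 * Real.pi) - (n : ℝ) / 2 * Real.log (τ1 * τ2)
    - (S1 - 2 * w * S12 + w ^ 2 * S2) / (2 * τ1) - S2 / (2 * τ2)

/-- Log-likelihood of the reverse model, with the roles of the indices 1 and 2 swapped. -/
noncomputable def loglik2 (n : ℕ) (S1 S2 S12 : ℝ) (w σ1 σ2 : ℝ) : ℝ :=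
  -(n : ℝ) * Real.log (2 * Real.pi) - (n : ℝ) / 2 * Real.log (σ2 * σ1)
    - (S2 - 2 * w * S12 + w ^ 2 * S1) / (2 * σ2) - S1 / (2 * σ1)

open Real

lemma loglik2_eq_loglik1_swap (n : ℕ) (S1 S2 S12 w σ1 σ2 : ℝ) :
    loglik2 n S1 S2 S12 w σ1 σ2 = loglik1 n S2 S1 S12 w σ2 σ1 :=
  rfl

lemma loglik1_of_fitted {n : ℕ} {S1 S2 S12 w τ1 τ2 : ℝ} (hτ1 : τ1 ≠ 0) (hτ2 : τ2 ≠ 0)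
    (hrss : S1 - 2 * w * S12 + w ^ 2 * S2 = n * τ1) (hS2 : S2 = n * τ2) :
    loglik1 n S1 S2 S12 w τ1 τ2 = -n * log (2 * π) - n / 2 * log (τ1 * τ2) - n := by
  rw [loglik1, hrss, hS2]
  field_simp
  ring

lemma loglik1_mle {n : ℕ} {S1 S2 S12 : ℝ} (hn : (n : ℝ) ≠ 0) (hS2 : S2 ≠ 0)
    (hdet : S1 * S2 - S12 ^ 2 ≠ 0) :
    loglik1 n S1 S2 S12 (S12 / S2) ((S1 * S2 - S12 ^ 2) / (n * S2)) (S2 / n) =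
      -n * log (2 * π) - n / 2 * log ((S1 * S2 - S12 ^ 2) / n ^ 2) - n := by
  have hprod : (S1 * S2 - S12 ^ 2) / (n * S2) * (S2 / n) = (S1 * S2 - S12 ^ 2) / n ^ 2 := by
    field_simp
  rw [loglik1_of_fitted (by positivity) (by positivity) _ (by field_simp), hprod]
  field_simp
  ring

lemma loglik2_mle {n : ℕ} {S1 S2 S12 : ℝ} (hn : (n : ℝ) ≠ 0) (hS1 : S1 ≠ 0)
    (hdet : S1 * S2 - S12 ^ 2 ≠ 0) :
    loglik2 n S1 S2 S12 (S12 / S1) (S1 / n) ((S1 * S2 - S12 ^ 2) / (n * S1)) =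
      -n * log (2 * π) - n / 2 * log ((S1 * S2 - S12 ^ 2) / n ^ 2) - n := by
  rw [loglik2_eq_loglik1_swap, mul_comm S1 S2] at *
  exact loglik1_mle hn hS1 hdet

lemma gammaMap_mle {n : ℕ} {S1 S2 S12 : ℝ} (hn : (n : ℝ) ≠ 0) (hS1 : S1 ≠ 0) (hS2 : S2 ≠ 0) :
    gammaMap (S12 / S2, (S1 * S2 - S12 ^ 2) / (n * S2), S2 / n) =
      (S12 / S1, S1 / n, (S1 * S2 - S12 ^ 2) / (n * S1)) := by
  have hvar1 : (S12 / S2) ^ 2 * (S2 / n) + (S1 * S2 - S12 ^ 2) / (n * S2) = S1 / n := by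
    field_simp
    ring
  simp only [gammaMap, hvar1, Prod.mk.injEq, true_and]
  constructor <;> field_simp

theorem stmt_4_general (n : ℕ) (x1 : Fin n → ℝ)
    (S1 S2 S12 : ℝ)
    (hS1 : S1 = ∑ i, x1 i ^ 2)
    (hS1pos : 0 < S1) (hS2pos : 0 < S2) (hdet : 0 < S1 * S2 - S12 ^ 2) :
    let wHat1 := S12 / S2
    let t1Hat := (S1 * S2 - S12 ^ 2) / ((n : ℝ) * S2)
    let t2Hat := S2 / (n : ℝ)
    let wHat2 := S12 / S1
    let s1Hat := S1 / (n : ℝ)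
    let s2Hat := (S1 * S2 - S12 ^ 2) / ((n : ℝ) * S1)
    loglik1 n S1 S2 S12 wHat1 t1Hat t2Hat = loglik2 n S1 S2 S12 wHat2 s1Hat s2Hat ∧
      (wHat2, s1Hat, s2Hat) = gammaMap (wHat1, t1Hat, t2Hat) := by
  have hn : (n : ℝ) ≠ 0 := Nat.cast_ne_zero.mpr (by rintro rfl; simp [hS1] at hS1pos)
  exact ⟨(loglik1_mle hn hS2pos.ne' hdet.ne').trans (loglik2_mle hn hS1pos.ne' hdet.ne').symm,
    (gammaMap_mle hn hS1pos.ne' hS2pos.ne').symm⟩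

theorem stmt_4 (n : ℕ) (x1 x2 : Fin n → ℝ)
    (S1 S2 S12 : ℝ)
    (hS1 : S1 = ∑ i, x1 i ^ 2) (hS2 : S2 = ∑ i, x2 i ^ 2)
    (hS12 : S12 = ∑ i, x1 i * x2 i)
    (hS1pos : 0 < S1) (hS2pos : 0 < S2) (hdet : 0 < S1 * S2 - S12 ^ 2) :
    let wHat1 := S12 / S2
    let t1Hat := (S1 * S2 - S12 ^ 2) / ((n : ℝ) * S2)
    let t2Hat := S2 / (n : ℝ)
    let wHat2 := S12 / S1
    let s1Hat := S1 / (n : ℝ)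
    let s2Hat := (S1 * S2 - S12 ^ 2) / ((n : ℝ) * S1)
    loglik1 n S1 S2 S12 wHat1 t1Hat t2Hat = loglik2 n S1 S2 S12 wHat2 s1Hat s2Hat ∧
      (wHat2, s1Hat, s2Hat) = gammaMap (wHat1, t1Hat, t2Hat) :=
  stmt_4_general n x1 S1 S2 S12 hS1 hS1pos hS2pos hdet
end

section
/- Fix w* ≠ 0, τ₁*², τ₂*² > 0, y ≠ 0, and η ∈ (0,1). Let D₂₃ = (η/2) log(1 + w*²τ₁*²/τ₂*²) and D₂₁ = D₂₃ + (1/2) log(1 − η² w*²τ₁*² / (η(w*²τ₁*² + τ₂*²) + (1−η)y²)). Then 0 < η² w*²τ₁*² / (η(w*²τ₁*² + τ₂*²) + (1−η)y²) < 1 and D₂₁ < D₂₃. -/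
/-
The ratio q is positive because every term of its denominator is nonnegative and η(w²τ₁ + τ₂) > 0,
and q < 1 because η² < η makes the numerator η²w²τ₁ smaller than the denominator term ηw²τ₁.
Hence log(1 - q) < 0, so D₂₁ = D₂₃ + ½ log(1 - q) < D₂₃.
-/

open Set

section MixedRatio

variable {a b c η : ℝ}

lemma mixed_denom_pos (ha : 0 < a) (hb : 0 < b) (hc : 0 ≤ c) (hη : η ∈ Ioo (0 : ℝ) 1) :
    0 < η * (a + b) + (1 - η) * c := by
  have : 0 ≤ 1 - η := by linarith [hη.2]
  have := hη.1
  positivity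

lemma mixed_ratio_pos (ha : 0 < a) (hb : 0 < b) (hc : 0 ≤ c) (hη : η ∈ Ioo (0 : ℝ) 1) :
    0 < η ^ 2 * a / (η * (a + b) + (1 - η) * c) :=
  div_pos (by have := hη.1; positivity) (mixed_denom_pos ha hb hc hη)

lemma mixed_ratio_lt_one (ha : 0 < a) (hb : 0 < b) (hc : 0 ≤ c) (hη : η ∈ Ioo (0 : ℝ) 1) :
    η ^ 2 * a / (η * (a + b) + (1 - η) * c) < 1 := by
  obtain ⟨hη0, hη1⟩ := hη
  rw [div_lt_one (mixed_denom_pos ha hb hc ⟨hη0, hη1⟩)]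
  have hsq : η ^ 2 * a < η * a := by gcongr; exact pow_lt_self_of_lt_one₀ hη0 hη1 one_lt_two
  linarith [mul_pos hη0 hb, mul_nonneg (sub_nonneg.2 hη1.le) hc]

end MixedRatio

theorem stmt_17_general (w τ1 τ2 y η : ℝ) (hw : w ≠ 0) (h1 : 0 < τ1) (h2 : 0 < τ2)
    (hη : η ∈ Set.Ioo (0 : ℝ) 1) :
    let D23 := η / 2 * Real.log (1 + w ^ 2 * τ1 / τ2)
    let q := η ^ 2 * w ^ 2 * τ1 / (η * (w ^ 2 * τ1 + τ2) + (1 - η) * y ^ 2)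
    let D21 := D23 + (1 / 2) * Real.log (1 - q)
    0 < q ∧ q < 1 ∧ D21 < D23 := by
  intro D23 q D21
  have ha : 0 < w ^ 2 * τ1 := by positivity
  have hq : q = η ^ 2 * (w ^ 2 * τ1) / (η * (w ^ 2 * τ1 + τ2) + (1 - η) * y ^ 2) := by
    simp only [q, mul_assoc]
  have hq0 : 0 < q := hq ▸ mixed_ratio_pos ha h2 (sq_nonneg y) hη
  have hq1 : q < 1 := hq ▸ mixed_ratio_lt_one ha h2 (sq_nonneg y) hη
  have hlog : Real.log (1 - q) < 0 := Real.log_neg (by linarith) (by linarith)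
  exact ⟨hq0, hq1, by simp only [D21]; linarith⟩

theorem stmt_17 (w τ1 τ2 y η : ℝ) (hw : w ≠ 0) (h1 : 0 < τ1) (h2 : 0 < τ2)
    (hy : y ≠ 0) (hη : η ∈ Set.Ioo (0 : ℝ) 1) :
    let D23 := η / 2 * Real.log (1 + w ^ 2 * τ1 / τ2)
    let q := η ^ 2 * w ^ 2 * τ1 / (η * (w ^ 2 * τ1 + τ2) + (1 - η) * y ^ 2)
    let D21 := D23 + (1 / 2) * Real.log (1 - q)
    0 < q ∧ q < 1 ∧ D21 < D23 :=
  stmt_17_general w τ1 τ2 y η hw h1 h2 hη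
end
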